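/- Let Z = {z_1, ..., z_m} with 0 ≤ z_1 < ... < z_m ≤ 1, and let μ be a probability measure on Z with Σ_j μ(z_j) · z_j = p for some p ∈ [z_1, z_m]. Then μ can be written as a convex combination μ = Σ_{(j,k)} α_{j,k} μ_{j,k}, where the sum ranges over pairs (j,k) with z_j ≤ p ≤ z_k, the α_{j,k} are nonnegative reals summing to 1, and μ_{j,k} is the two-point measure placing mass (z_k - p)/(z_k - z_j) on z_j and (p - z_j)/(z_k - z_j) on z_k (interpreted as the Dirac measure at p when z_j = z_k = p). -/

import Mathlib

set_option maxHeartbeats 2000000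


noncomputable def twoPointMeasure {m : ℕ} (z : Fin m → ℝ) (p : ℝ) (j k i : Fin m) : ℝ :=
  if z j = z k then (if i = j then 1 else 0)
  else (if i = j then (z k - p) / (z k - z j) else 0) +
       (if i = k then (p - z j) / (z k - z j) else 0)

theorem stmt_1 {m : ℕ} (z : Fin (m + 1) → ℝ) (hz : StrictMono z)
    (h0 : 0 ≤ z 0) (h1 : z (Fin.last m) ≤ 1)
    (μ : Fin (m + 1) → ℝ) (hμ0 : ∀ i, 0 ≤ μ i) (hμ1 : ∑ i, μ i = 1)
    (p : ℝ) (hmean : ∑ i, μ i * z i = p)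
    (hplow : z 0 ≤ p) (hphigh : p ≤ z (Fin.last m)) :
    ∃ α : Fin (m + 1) → Fin (m + 1) → ℝ,
      (∀ j k, 0 ≤ α j k) ∧
      (∀ j k, α j k ≠ 0 → z j ≤ p ∧ p ≤ z k) ∧
      (∑ j, ∑ k, α j k = 1) ∧
      (∀ i, μ i = ∑ j, ∑ k, α j k * twoPointMeasure z p j k i) := by
  set S : ℝ := ∑ k, (if p < z k then μ k * (z k - p) else 0) with hSdef
  have hS0 : 0 ≤ S := by
    apply Finset.sum_nonneg
    intro k _
    split_ifs with h
    · have := hμ0 k; nlinarith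
    · exact le_refl 0
  have hzero : ∑ i, μ i * (z i - p) = 0 := by
    have : ∑ i, μ i * (z i - p) = (∑ i, μ i * z i) - (∑ i, μ i) * p := by
      rw [Finset.sum_mul, ← Finset.sum_sub_distrib]
      congr 1; ext i; ring
    rw [this, hmean, hμ1]; ring
  have hbal : ∑ j, (if z j < p then μ j * (p - z j) else 0) = S := by
    have key : ∀ i : Fin (m+1),
        (if p < z i then μ i * (z i - p) else 0) - (if z i < p then μ i * (p - z i) else 0)
          = μ i * (z i - p) := by
      intro i
      rcases lt_trichotomy (z i) p with h | h | h
      · rw [if_neg (by linarith), if_pos h]; ring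
      · rw [if_neg (by linarith), if_neg (by linarith)]; rw [h]; ring
      · rw [if_pos h, if_neg (by linarith)]; ring
    have := Finset.sum_congr rfl (fun i (_ : i ∈ Finset.univ) => key i)
    rw [Finset.sum_sub_distrib] at this
    rw [hzero] at this
    linarith [this]
  by_cases hS : S = 0
  · -- degenerate case: all mass at z = p
    have hterms : ∀ i : Fin (m+1), (if z i < p then μ i * (p - z i) else 0) = 0 := by
      have h := hbal; rw [hS] at h
      have := (Finset.sum_eq_zero_iff_of_nonneg (fun i _ => by
        split_ifs with hh
        · have := hμ0 i; nlinarith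
        · exact le_refl 0)).1 h
      intro i; exact this i (Finset.mem_univ i)
    have hterms' : ∀ i : Fin (m+1), (if p < z i then μ i * (z i - p) else 0) = 0 := by
      have h := (Finset.sum_eq_zero_iff_of_nonneg (fun k (_ : k ∈ Finset.univ) => by
        split_ifs with hh
        · have := hμ0 k; nlinarith
        · exact le_refl 0)).1 hS
      intro i; exact h i (Finset.mem_univ i)
    have hμz : ∀ i : Fin (m+1), z i ≠ p → μ i = 0 := by
      intro i hne
      rcases lt_or_gt_of_ne hne with h | h
      · have := hterms i; rw [if_pos h] at this
        have hp : 0 < p - z i := by linarith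
        nlinarith
      · have := hterms' i; rw [if_pos h] at this
        have hp : 0 < z i - p := by linarith
        nlinarith
    refine ⟨fun j k => if j = k then μ j else 0, ?_, ?_, ?_, ?_⟩
    · intro j k; dsimp only; split_ifs with h
      · exact hμ0 j
      · exact le_refl 0
    · intro j k h
      dsimp only at h
      by_cases hjk : j = k
      · subst hjk
        rw [if_pos rfl] at h
        by_cases hzp : z j = p
        · exact ⟨le_of_eq hzp, ge_of_eq hzp⟩
        · exact absurd (hμz j hzp) h
      · rw [if_neg hjk] at h; exact absurd rfl h
    · dsimp only
      calc ∑ j, ∑ k, (if j = k then μ j else 0) = ∑ j, μ j := by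
            apply Finset.sum_congr rfl; intro j _
            simp
          _ = 1 := hμ1
    · intro i
      dsimp only
      have step : ∀ j, ∑ k, (if j = k then μ j else 0) * twoPointMeasure z p j k i
          = μ j * (if i = j then 1 else 0) := by
        intro j
        have : ∀ k, (if j = k then μ j else 0) * twoPointMeasure z p j k i
            = if j = k then μ j * twoPointMeasure z p j j i else 0 := by
          intro k; split_ifs with h
          · subst h; rfl
          · ring
        rw [Finset.sum_congr rfl (fun k _ => this k)]
        rw [Finset.sum_ite_eq Finset.univ j]
        rw [if_pos (Finset.mem_univ j)]
        unfold twoPointMeasure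
        rw [if_pos rfl]
      rw [Finset.sum_congr rfl (fun j _ => step j)]
      simp
  · have hSpos : 0 < S := lt_of_le_of_ne hS0 (Ne.symm hS)
    have hSne : S ≠ 0 := hS
    have hrec : ∀ i, ∑ j, ∑ k,
        ((if z j < p ∧ p < z k then μ j * μ k * (z k - z j) / S else 0) +
         (if j = k ∧ z j = p then μ j else 0)) * twoPointMeasure z p j k i = μ i := by
      intro i
      have hpt : ∀ j k : Fin (m+1),
          ((if z j < p ∧ p < z k then μ j * μ k * (z k - z j) / S else 0) +
           (if j = k ∧ z j = p then μ j else 0)) * twoPointMeasure z p j k i =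
          (if i = j then (if z j < p ∧ p < z k then μ j * μ k * (z k - p) / S else 0) else 0) +
          (if i = k then (if z j < p ∧ p < z k then μ j * μ k * (p - z j) / S else 0) else 0) +
          (if j = k then (if i = j ∧ z j = p then μ j else 0) else 0) := by
        intro j k
        by_cases h1 : z j < p ∧ p < z k
        · obtain ⟨h1a, h1b⟩ := h1
          have hne : z j ≠ z k := ne_of_lt (lt_trans h1a h1b)
          have hzz : z k - z j ≠ 0 := sub_ne_zero.mpr (Ne.symm hne)
          have h2 : ¬(j = k ∧ z j = p) := by
            rintro ⟨rfl, hp⟩; exact absurd hp (ne_of_lt h1a)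
          have h2' : j ≠ k := fun hjk => hne (by rw [hjk])
          unfold twoPointMeasure
          rw [if_neg hne, if_pos ⟨h1a, h1b⟩, if_neg h2, if_neg h2']
          simp only [if_pos (⟨h1a, h1b⟩ : z j < p ∧ p < z k)]
          split_ifs <;> field_simp <;> ring
        · simp only [if_neg h1]
          by_cases h2 : j = k ∧ z j = p
          · obtain ⟨rfl, hp⟩ := h2
            unfold twoPointMeasure
            rw [if_pos rfl, if_pos (⟨rfl, hp⟩ : j = j ∧ z j = p), if_pos rfl]
            simp only [hp, eq_self_iff_true, and_true]
            split_ifs <;> first | ring1 | tauto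
          · rw [if_neg h2]
            split_ifs <;> first | ring1 | tauto
      rw [Finset.sum_congr rfl (fun j _ => Finset.sum_congr rfl (fun k _ => hpt j k))]
      have hsplit : ∀ j : Fin (m+1), ∑ k,
          ((if i = j then (if z j < p ∧ p < z k then μ j * μ k * (z k - p) / S else 0) else 0) +
           (if i = k then (if z j < p ∧ p < z k then μ j * μ k * (p - z j) / S else 0) else 0) +
           (if j = k then (if i = j ∧ z j = p then μ j else 0) else 0)) =
          (∑ k, (if i = j then (if z j < p ∧ p < z k then μ j * μ k * (z k - p) / S else 0) else 0)) +
          (∑ k, (if i = k then (if z j < p ∧ p < z k then μ j * μ k * (p - z j) / S else 0) else 0)) +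
          (∑ k, (if j = k then (if i = j ∧ z j = p then μ j else 0) else 0)) := by
        intro j; rw [Finset.sum_add_distrib, Finset.sum_add_distrib]
      rw [Finset.sum_congr rfl (fun j _ => hsplit j), Finset.sum_add_distrib,
        Finset.sum_add_distrib]
      have hT1 : ∑ j, ∑ k, (if i = j then
          (if z j < p ∧ p < z k then μ j * μ k * (z k - p) / S else 0) else 0) =
          if z i < p then μ i else 0 := by
        have inner : ∀ j : Fin (m+1), ∑ k, (if i = j then
            (if z j < p ∧ p < z k then μ j * μ k * (z k - p) / S else 0) else 0) =
            if i = j then (∑ k, if z j < p ∧ p < z k then μ j * μ k * (z k - p) / S else 0)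
            else 0 := by
          intro j; by_cases h : i = j <;> simp [h]
        rw [Finset.sum_congr rfl (fun j _ => inner j), Finset.sum_ite_eq,
          if_pos (Finset.mem_univ i)]
        have fact : ∀ k : Fin (m+1), (if z i < p ∧ p < z k then μ i * μ k * (z k - p) / S else 0)
            = (if z i < p then μ i / S else 0) * (if p < z k then μ k * (z k - p) else 0) := by
          intro k; split_ifs <;> first | ring1 | tauto
        rw [Finset.sum_congr rfl (fun k _ => fact k), ← Finset.mul_sum, ← hSdef]
        split_ifs with h
        · rw [div_mul_cancel₀ _ hSne]
        · rw [zero_mul]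
      have hT2 : ∑ j, ∑ k, (if i = k then
          (if z j < p ∧ p < z k then μ j * μ k * (p - z j) / S else 0) else 0) =
          if p < z i then μ i else 0 := by
        have inner : ∀ j : Fin (m+1), ∑ k, (if i = k then
            (if z j < p ∧ p < z k then μ j * μ k * (p - z j) / S else 0) else 0) =
            if z j < p ∧ p < z i then μ j * μ i * (p - z j) / S else 0 := by
          intro j
          rw [Finset.sum_ite_eq, if_pos (Finset.mem_univ i)]
        rw [Finset.sum_congr rfl (fun j _ => inner j)]
        have fact : ∀ j : Fin (m+1), (if z j < p ∧ p < z i then μ j * μ i * (p - z j) / S else 0)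
            = (if p < z i then μ i / S else 0) * (if z j < p then μ j * (p - z j) else 0) := by
          intro j; split_ifs <;> first | ring1 | tauto
        rw [Finset.sum_congr rfl (fun j _ => fact j), ← Finset.mul_sum, hbal]
        split_ifs with h
        · rw [div_mul_cancel₀ _ hSne]
        · rw [zero_mul]
      have hT3 : ∑ j, ∑ k, (if j = k then (if i = j ∧ z j = p then μ j else 0) else 0) =
          if z i = p then μ i else 0 := by
        have inner : ∀ j : Fin (m+1), ∑ k, (if j = k then
            (if i = j ∧ z j = p then μ j else 0) else 0) =
            if i = j then (if z j = p then μ j else 0) else 0 := by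
          intro j
          rw [Finset.sum_ite_eq, if_pos (Finset.mem_univ j)]
          split_ifs <;> first | rfl | tauto
        rw [Finset.sum_congr rfl (fun j _ => inner j), Finset.sum_ite_eq,
          if_pos (Finset.mem_univ i)]
      rw [hT1, hT2, hT3]
      rcases lt_trichotomy (z i) p with h | h | h
      · rw [if_pos h, if_neg (by linarith), if_neg (by linarith)]; ring
      · rw [if_neg (by linarith), if_neg (by linarith), if_pos h]; ring
      · rw [if_neg (by linarith), if_pos h, if_neg (by linarith)]; ring
    have htp1 : ∀ j k : Fin (m+1), ∑ i, twoPointMeasure z p j k i = 1 := by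
      intro j k
      unfold twoPointMeasure
      by_cases h : z j = z k
      · simp [h]
      · have hzz : z k - z j ≠ 0 := sub_ne_zero.mpr (fun e => h e.symm)
        simp only [if_neg h, Finset.sum_add_distrib, Finset.sum_ite_eq', Finset.mem_univ,
          if_pos]
        field_simp
        ring
    refine ⟨fun j k =>
      (if z j < p ∧ p < z k then μ j * μ k * (z k - z j) / S else 0) +
      (if j = k ∧ z j = p then μ j else 0), ?_, ?_, ?_, ?_⟩
    case _ => -- nonneg
      intro j k; dsimp only
      apply add_nonneg
      · split_ifs with h
        · obtain ⟨h1, h2⟩ := h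
          apply div_nonneg _ (le_of_lt hSpos)
          exact mul_nonneg (mul_nonneg (hμ0 j) (hμ0 k)) (by linarith)
        · exact le_refl 0
      · split_ifs with h
        · exact hμ0 j
        · exact le_refl 0
    case _ => -- support
      intro j k h
      dsimp only at h
      by_cases h1 : z j < p ∧ p < z k
      · exact ⟨le_of_lt h1.1, le_of_lt h1.2⟩
      · by_cases h2 : j = k ∧ z j = p
        · obtain ⟨rfl, hp⟩ := h2
          exact ⟨le_of_eq hp, ge_of_eq hp⟩
        · rw [if_neg h1, if_neg h2] at h
          exact absurd (by ring) h
    case _ => -- total sum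
      dsimp only
      have step1 : ∀ j k : Fin (m+1),
          (if z j < p ∧ p < z k then μ j * μ k * (z k - z j) / S else 0) +
          (if j = k ∧ z j = p then μ j else 0) =
          ∑ i, ((if z j < p ∧ p < z k then μ j * μ k * (z k - z j) / S else 0) +
            (if j = k ∧ z j = p then μ j else 0)) * twoPointMeasure z p j k i := by
        intro j k
        rw [← Finset.mul_sum, htp1 j k, mul_one]
      rw [Finset.sum_congr rfl (fun j _ => Finset.sum_congr rfl (fun k _ => step1 j k))]
      rw [Finset.sum_congr rfl (fun j (_ : j ∈ Finset.univ) => Finset.sum_comm),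
        Finset.sum_comm]
      rw [Finset.sum_congr rfl (fun i (_ : i ∈ Finset.univ) => hrec i)]
      exact hμ1
    case _ => -- recovery
      intro i; dsimp only
      exact (hrec i).symm
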